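/- Every positive rational appears exactly once in the Stern–Brocot tree: the map from {0,1}* to ℚ>0 given by w ↦ (b+d)/(a+c) where M_w = [[a,b],[c,d]] is the matrix tree value at w, is a bijection. -/

import Mathlib

open Matrix

def SL2N (M : Matrix (Fin 2) (Fin 2) ℤ) : Prop :=
  (∀ i j, 0 ≤ M i j) ∧ M.det = 1

def Lmat : Matrix (Fin 2) (Fin 2) ℤ := !![1, 0; 1, 1]

def Rmat : Matrix (Fin 2) (Fin 2) ℤ := !![1, 1; 0, 1]

def matOf (w : List Bool) : Matrix (Fin 2) (Fin 2) ℤ :=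
  w.foldl (fun acc b => (if b then Rmat else Lmat) * acc) 1

def sbMatVal (M : Matrix (Fin 2) (Fin 2) ℤ) : ℚ :=
  ((M 0 1 + M 1 1 : ℤ) : ℚ) / ((M 0 0 + M 1 0 : ℤ) : ℚ)

/-!
Right multiplication by `R` or `L` acts on the column sums `(s, p)` of `M_w` by
`(s, p) ↦ (s, s + p)` or `(s + p, p)`, so the value `p / s` of the word `b :: w` is obtained
from that of `w` by `q ↦ q + 1` or `q ↦ q / (q + 1)`. On `ℚ>0` these maps are injective with
disjoint images `(1, ∞)` and `(0, 1)`, while the empty word has value `1`; injectivity follows by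
induction on words. Surjectivity is the subtractive Euclidean algorithm on `a / b`.
-/

theorem List.foldl_mul_left_eq_prod {M α : Type*} [Monoid M] (g : α → M) (w : List α) (a : M) :
    w.foldl (fun acc b => g b * acc) a = (w.map g).reverse.prod * a := by
  induction w generalizing a with
  | nil => simp
  | cons b w ih => simp [ih, mul_assoc]

theorem matOf_cons (b : Bool) (w : List Bool) :
    matOf (b :: w) = matOf w * if b then Rmat else Lmat := by
  rw [matOf, matOf, List.foldl_mul_left_eq_prod, List.foldl_mul_left_eq_prod]
  simp

def colSum (M : Matrix (Fin 2) (Fin 2) ℤ) (j : Fin 2) : ℤ := M 0 j + M 1 j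

section colSum

variable (M : Matrix (Fin 2) (Fin 2) ℤ)

@[simp] theorem colSum_mul_Rmat_zero : colSum (M * Rmat) 0 = colSum M 0 := by
  simp [colSum, Rmat, mul_apply, Fin.sum_univ_two]

@[simp] theorem colSum_mul_Rmat_one : colSum (M * Rmat) 1 = colSum M 0 + colSum M 1 := by
  simp [colSum, Rmat, mul_apply, Fin.sum_univ_two]; ring

@[simp] theorem colSum_mul_Lmat_zero : colSum (M * Lmat) 0 = colSum M 0 + colSum M 1 := by
  simp [colSum, Lmat, mul_apply, Fin.sum_univ_two]; ring

@[simp] theorem colSum_mul_Lmat_one : colSum (M * Lmat) 1 = colSum M 1 := by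
  simp [colSum, Lmat, mul_apply, Fin.sum_univ_two]

theorem sbMatVal_eq_div_colSum : sbMatVal M = colSum M 1 / colSum M 0 := rfl

theorem sbMatVal_mul_Rmat (hM : colSum M 0 ≠ 0) : sbMatVal (M * Rmat) = sbMatVal M + 1 := by
  have hM' : (colSum M 0 : ℚ) ≠ 0 := by exact_mod_cast hM
  simp only [sbMatVal_eq_div_colSum, colSum_mul_Rmat_zero, colSum_mul_Rmat_one]
  push_cast
  rw [add_div, div_self hM', add_comm]

theorem sbMatVal_mul_Lmat (hM : colSum M 0 ≠ 0) :
    sbMatVal (M * Lmat) = sbMatVal M / (sbMatVal M + 1) := by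
  have hM' : (colSum M 0 : ℚ) ≠ 0 := by exact_mod_cast hM
  simp only [sbMatVal_eq_div_colSum, colSum_mul_Lmat_zero, colSum_mul_Lmat_one]
  push_cast
  rw [div_add_one hM', div_div_div_cancel_right₀ hM', add_comm]

end colSum

theorem colSum_matOf_pos (w : List Bool) (j : Fin 2) : 0 < colSum (matOf w) j := by
  induction w generalizing j with
  | nil => fin_cases j <;> simp [colSum, matOf]
  | cons b w ih =>
    have h0 := ih 0
    have h1 := ih 1
    cases b <;> fin_cases j <;> simp [matOf_cons] <;> linarith

def sbStep : Bool → ℚ → ℚ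
  | true, q => q + 1
  | false, q => q / (q + 1)

section sbStep

variable {q r : ℚ}

theorem sbStep_pos (b : Bool) (hq : 0 < q) : 0 < sbStep b q := by
  cases b <;> simp only [sbStep] <;> positivity

theorem sbStep_false_lt_one (hq : 0 < q) : sbStep false q < 1 :=
  (div_lt_one (by positivity)).2 (lt_add_one q)

theorem one_lt_sbStep_true (hq : 0 < q) : 1 < sbStep true q := by
  simp only [sbStep]; linarith

theorem sbStep_ne_one (b : Bool) (hq : 0 < q) : sbStep b q ≠ 1 := by
  cases b
  · exact (sbStep_false_lt_one hq).ne
  · exact (one_lt_sbStep_true hq).ne'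

theorem sbStep_eq_sbStep_iff {b c : Bool} (hq : 0 < q) (hr : 0 < r) :
    sbStep b q = sbStep c r ↔ b = c ∧ q = r := by
  refine ⟨fun h => ?_, fun ⟨hbc, hqr⟩ => hbc ▸ hqr ▸ rfl⟩
  cases b <;> cases c
  · simp only [sbStep] at h
    rw [div_eq_div_iff (by positivity) (by positivity)] at h
    exact ⟨rfl, by linarith⟩
  · linarith [sbStep_false_lt_one hq, one_lt_sbStep_true hr]
  · linarith [sbStep_false_lt_one hr, one_lt_sbStep_true hq]
  · simp only [sbStep, add_left_inj] at h
    exact ⟨rfl, h⟩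

end sbStep

theorem sbMatVal_matOf_nil : sbMatVal (matOf []) = 1 := by
  simp [sbMatVal, matOf]

theorem sbMatVal_matOf_cons (b : Bool) (w : List Bool) :
    sbMatVal (matOf (b :: w)) = sbStep b (sbMatVal (matOf w)) := by
  have hw := (colSum_matOf_pos w 0).ne'
  cases b
  · simp [matOf_cons, sbStep, sbMatVal_mul_Lmat _ hw]
  · simp [matOf_cons, sbStep, sbMatVal_mul_Rmat _ hw]

theorem sbMatVal_matOf_pos (w : List Bool) : 0 < sbMatVal (matOf w) := by
  induction w with
  | nil => simp [sbMatVal_matOf_nil]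
  | cons b w ih => simpa only [sbMatVal_matOf_cons] using sbStep_pos b ih

theorem sbMatVal_matOf_injective : Function.Injective fun w => sbMatVal (matOf w) := by
  intro w₁
  induction w₁ with
  | nil =>
    rintro (_ | ⟨c, w₂⟩) h
    · rfl
    · simp only [sbMatVal_matOf_nil, sbMatVal_matOf_cons] at h
      exact absurd h.symm (sbStep_ne_one c (sbMatVal_matOf_pos w₂))
  | cons b w₁ ih =>
    rintro (_ | ⟨c, w₂⟩) h
    · simp only [sbMatVal_matOf_nil, sbMatVal_matOf_cons] at h
      exact absurd h (sbStep_ne_one b (sbMatVal_matOf_pos w₁))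
    · simp only [sbMatVal_matOf_cons] at h
      obtain ⟨rfl, hw⟩ :=
        (sbStep_eq_sbStep_iff (sbMatVal_matOf_pos _) (sbMatVal_matOf_pos _)).1 h
      rw [ih hw]

theorem exists_sbMatVal_matOf_eq_div (a b : ℕ) (ha : 0 < a) (hb : 0 < b) :
    ∃ w, sbMatVal (matOf w) = a / b := by
  rcases lt_trichotomy a b with hab | rfl | hab
  · obtain ⟨k, rfl⟩ := Nat.exists_eq_add_of_lt hab
    obtain ⟨w, hw⟩ := exists_sbMatVal_matOf_eq_div a (k + 1) ha k.succ_pos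
    refine ⟨false :: w, ?_⟩
    rw [sbMatVal_matOf_cons, hw, sbStep]
    field_simp
    push_cast
    ring
  · exact ⟨[], by simp [sbMatVal_matOf_nil, ha.ne']⟩
  · obtain ⟨k, rfl⟩ := Nat.exists_eq_add_of_lt hab
    obtain ⟨w, hw⟩ := exists_sbMatVal_matOf_eq_div (k + 1) b k.succ_pos hb
    refine ⟨true :: w, ?_⟩
    rw [sbMatVal_matOf_cons, hw, sbStep]
    field_simp
    push_cast
    ring
termination_by a + b

theorem exists_sbMatVal_matOf_eq (q : ℚ) (hq : 0 < q) : ∃ w, sbMatVal (matOf w) = q := by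
  have hnum := Rat.num_pos.2 hq
  obtain ⟨w, hw⟩ :=
    exists_sbMatVal_matOf_eq_div q.num.natAbs q.den (Int.natAbs_pos.2 hnum.ne') q.pos
  refine ⟨w, hw.trans ?_⟩
  rw [Nat.cast_natAbs, abs_of_pos hnum, Rat.num_div_den]

/-- Every positive rational appears exactly once in the Stern–Brocot tree. -/
theorem stmt16 :
    (∀ w : List Bool, 0 < sbMatVal (matOf w)) ∧
    (∀ q : ℚ, 0 < q → ∃! w : List Bool, sbMatVal (matOf w) = q) := by
  refine ⟨sbMatVal_matOf_pos, fun q hq => ?_⟩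
  obtain ⟨w, hw⟩ := exists_sbMatVal_matOf_eq q hq
  exact ⟨w, hw, fun w' hw' => sbMatVal_matOf_injective (hw'.trans hw.symm)⟩
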